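/- Let u : P₂(ℝ^d) → ℝ be L-differentiable with L-derivative ∂_μ u(μ,·) : ℝ^d → ℝ^d jointly continuous. For N > 1 define the empirical projection u^N : (ℝ^d)^N → ℝ by u^N(x¹,...,x^N) = u((1/N)∑_{l=1}^N δ_{x^l}). Then u^N is differentiable on (ℝ^d)^N and ∂_{x^j} u^N(x¹,...,x^N) = (1/N) ∂_μ u((1/N)∑_l δ_{x^l}, x^j) for every j. -/

import Mathlib

/-! Richness of `Ω` yields a random index `ι : Ω → Fin N` with uniform law: take a random
variable whose law is the empirical measure of `N` distinct points and read off which point it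
hits. Precomposition `y ↦ y ∘ ι` is then a continuous linear map `(ℝ^d)^N → L²(Ω; ℝ^d)`, and the
law of `y ∘ ι` is the empirical measure of `y`. Hence `u^N` is the lift of `u` composed with a
continuous linear map, and the chain rule gives its derivative; integrating against the uniform
index produces the factor `1/N`. -/

open MeasureTheory Set Filter
open scoped ENNReal BigOperators RealInnerProductSpace

noncomputable def empMeas {d N : ℕ} (x : Fin N → EuclideanSpace ℝ (Fin d)) :
    Measure (EuclideanSpace ℝ (Fin d)) :=
  (N : ℝ≥0∞)⁻¹ • ∑ i : Fin N, Measure.dirac (x i)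

lemma map_smul_sum_dirac {α β ι : Type*} [MeasurableSpace α] [MeasurableSpace β]
    {f : α → β} (hf : Measurable f) (c : ℝ≥0∞) (s : Finset ι) (x : ι → α) :
    (c • ∑ i ∈ s, Measure.dirac (x i)).map f = c • ∑ i ∈ s, Measure.dirac (f (x i)) := by
  rw [Measure.map_smul, Measure.map_finset_sum hf.aemeasurable]
  simp only [Measure.map_dirac' hf]

lemma exists_measurable_leftInverse {α β : Type*} [Finite α] [Nonempty α] [MeasurableSpace α]
    [DiscreteMeasurableSpace α] [MeasurableSpace β] [MeasurableSingletonClass β]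
    {p : α → β} (hp : Function.Injective p) : ∃ q : β → α, Measurable q ∧ q ∘ p = id :=
  have hp' : MeasurableEmbedding p :=
    ⟨hp, .of_discrete, fun s _ => (s.toFinite.image p).measurableSet⟩
  hp'.exists_measurable_extend measurable_id fun _ => inferInstance

lemma exists_measurable_map_eq_smul_sum_dirac {Ω α β : Type*} [MeasurableSpace Ω]
    {μ : Measure Ω} [Fintype α] [Nonempty α] [MeasurableSpace α] [DiscreteMeasurableSpace α]
    [MeasurableSpace β] [MeasurableSingletonClass β] {Z : Ω → β} (hZ : Measurable Z)
    {p : α → β} (hp : Function.Injective p) {c : ℝ≥0∞}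
    (hμ : μ.map Z = c • ∑ i, Measure.dirac (p i)) :
    ∃ ι : Ω → α, Measurable ι ∧ μ.map ι = c • ∑ i, Measure.dirac i := by
  obtain ⟨q, hq, hqp⟩ := exists_measurable_leftInverse hp
  refine ⟨q ∘ Z, hq.comp hZ, ?_⟩
  rw [← Measure.map_map hq hZ, hμ, map_smul_sum_dirac hq]
  simp only [← Function.comp_apply (f := q), hqp, id]

lemma integral_comp_of_map_eq_smul_sum_dirac {Ω α G : Type*} [MeasurableSpace Ω]
    {μ : Measure Ω} [Fintype α] [MeasurableSpace α] [DiscreteMeasurableSpace α]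
    [NormedAddCommGroup G] [NormedSpace ℝ G] [CompleteSpace G] {ι : Ω → α} (hι : Measurable ι)
    {c : ℝ≥0∞} (hμ : μ.map ι = c • ∑ i, Measure.dirac i) (f : α → G) :
    ∫ ω, f (ι ω) ∂μ = c.toReal • ∑ i, f i := by
  rw [← integral_map hι.aemeasurable .of_discrete, hμ, integral_smul_measure,
    integral_finsetSum_measure fun i _ => integrable_dirac enorm_lt_top]
  simp only [integral_dirac]

section precompLp

variable {Ω α E : Type*} [MeasurableSpace Ω] {μ : Measure Ω} [IsFiniteMeasure μ]
  [Fintype α] [MeasurableSpace α] [DiscreteMeasurableSpace α] [NormedAddCommGroup E]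
  {p : ℝ≥0∞} {ι : Ω → α}

lemma memLp_comp_of_finite (hι : Measurable ι) (y : α → E) : MemLp (y ∘ ι) p μ :=
  MemLp.of_bound (AEStronglyMeasurable.of_discrete.comp_measurable hι) ‖y‖
    (Eventually.of_forall fun ω => norm_le_pi_norm y (ι ω))

variable [NormedSpace ℝ E] [Fact (1 ≤ p)]

variable (μ p) in
noncomputable def precompLp (hι : Measurable ι) : (α → E) →L[ℝ] Lp E p μ :=
  LinearMap.mkContinuous
    { toFun := fun y => (memLp_comp_of_finite hι y).toLp (y ∘ ι)
      map_add' := fun _ _ => MemLp.toLp_add _ _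
      map_smul' := fun c _ => MemLp.toLp_const_smul c _ }
    (measureUnivNNReal μ ^ p.toReal⁻¹)
    fun y => Lp.norm_le_of_ae_bound (norm_nonneg y) <|
      (memLp_comp_of_finite hι y).coeFn_toLp.mono fun ω hω => hω ▸ norm_le_pi_norm y (ι ω)

lemma precompLp_ae_eq (hι : Measurable ι) (y : α → E) :
    precompLp μ p hι y =ᵐ[μ] y ∘ ι :=
  (memLp_comp_of_finite hι y).coeFn_toLp

lemma map_precompLp [MeasurableSpace E] [BorelSpace E] (hι : Measurable ι) (y : α → E) :
    μ.map (precompLp μ p hι y) = (μ.map ι).map y := by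
  rw [Measure.map_congr (precompLp_ae_eq hι y), Measure.map_map .of_discrete hι]

end precompLp

section piInnerSL

variable {α E : Type*} [Fintype α] [NormedAddCommGroup E] [InnerProductSpace ℝ E]

noncomputable def piInnerSL (w : α → E) : (α → E) →L[ℝ] ℝ :=
  ∑ j, (innerSL ℝ (w j)).comp (ContinuousLinearMap.proj j)

lemma piInnerSL_apply (w y : α → E) : piInnerSL w y = ∑ j, ⟪w j, y j⟫ := by
  simp [piInnerSL]

lemma piInnerSL_single [DecidableEq α] (w : α → E) (j : α) (v : E) :
    piInnerSL w (Pi.single j v) = ⟪w j, v⟫ := by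
  rw [piInnerSL_apply, Finset.sum_eq_single j (fun k _ hk => by simp [hk]) (by simp)]
  simp

lemma integral_inner_precompLp {Ω : Type*} [MeasurableSpace Ω] {μ : Measure Ω}
    [IsFiniteMeasure μ] [MeasurableSpace α] [DiscreteMeasurableSpace α] {p : ℝ≥0∞}
    [Fact (1 ≤ p)] {ι : Ω → α} (hι : Measurable ι) {c : ℝ≥0∞}
    (hμ : μ.map ι = c • ∑ i, Measure.dirac i) (a : E → E) (x y : α → E) :
    ∫ ω, ⟪a (precompLp μ p hι x ω), precompLp μ p hι y ω⟫ ∂μ =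
      piInnerSL (fun i => c.toReal • a (x i)) y := by
  have hae : (fun ω => ⟪a (precompLp μ p hι x ω), precompLp μ p hι y ω⟫) =ᵐ[μ]
      fun ω => ⟪a (x (ι ω)), y (ι ω)⟫ := by
    filter_upwards [precompLp_ae_eq (μ := μ) (p := p) hι x,
      precompLp_ae_eq (μ := μ) (p := p) hι y] with ω hx hy
    rw [hx, hy, Function.comp_apply, Function.comp_apply]
  rw [integral_congr_ae hae, integral_comp_of_map_eq_smul_sum_dirac hι hμ fun i => ⟪a (x i), y i⟫,
    piInnerSL_apply, Finset.smul_sum]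
  simp only [real_inner_smul_left, smul_eq_mul]

end piInnerSL

lemma empMeas_eq_map {d N : ℕ} (x : Fin N → EuclideanSpace ℝ (Fin d)) :
    empMeas x = ((N : ℝ≥0∞)⁻¹ • ∑ i, Measure.dirac i).map x := by
  rw [map_smul_sum_dirac .of_discrete, empMeas]

lemma isProbabilityMeasure_empMeas {d N : ℕ} [NeZero N] (x : Fin N → EuclideanSpace ℝ (Fin d)) :
    IsProbabilityMeasure (empMeas x) := by
  constructor
  simp [empMeas, ENNReal.inv_mul_cancel (NeZero.ne (N : ℝ≥0∞))]

lemma lintegral_nnnorm_sq_empMeas_lt_top {d N : ℕ} [NeZero N]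
    (x : Fin N → EuclideanSpace ℝ (Fin d)) : ∫⁻ y, ‖y‖₊ ^ 2 ∂empMeas x < ⊤ := by
  simp only [empMeas, lintegral_smul_measure, lintegral_finsetSum_measure, lintegral_dirac]
  exact ENNReal.mul_lt_top (by simpa using NeZero.pos N) (by simp [ENNReal.sum_lt_top])

theorem empirical_projection_lions_derivative_general {d N : ℕ}
    (Ω : Type) [MeasureSpace Ω] [IsProbabilityMeasure (volume : Measure Ω)]
    (u : Measure (EuclideanSpace ℝ (Fin d)) → ℝ)
    (Du : Measure (EuclideanSpace ℝ (Fin d)) → EuclideanSpace ℝ (Fin d) →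
      EuclideanSpace ℝ (Fin d))
    -- the underlying probability space is rich enough: any law with finite second
    -- moment is realized by some square-integrable random variable
    (hrich : ∀ μ : Measure (EuclideanSpace ℝ (Fin d)), IsProbabilityMeasure μ →
      (∫⁻ x, ‖x‖₊ ^ 2 ∂μ) < ⊤ →
        ∃ X : Lp (EuclideanSpace ℝ (Fin d)) 2 (volume : Measure Ω),
          Measure.map (X : Ω → EuclideanSpace ℝ (Fin d)) volume = μ)
    -- L-differentiability: the lift is Fréchet differentiable at every `X`, with
    -- derivative represented by `∂_μ u (Law X, X ·) = Du (Law X) (X ·)`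
    (hL : ∀ X : Lp (EuclideanSpace ℝ (Fin d)) 2 (volume : Measure Ω),
      ∃ D' : Lp (EuclideanSpace ℝ (Fin d)) 2 (volume : Measure Ω) →L[ℝ] ℝ,
        HasFDerivAt
          (fun Y : Lp (EuclideanSpace ℝ (Fin d)) 2 (volume : Measure Ω) =>
            u (Measure.map (Y : Ω → EuclideanSpace ℝ (Fin d)) volume)) D' X ∧
        ∀ Y : Lp (EuclideanSpace ℝ (Fin d)) 2 (volume : Measure Ω),
          D' Y = ∫ ω, ⟪Du (Measure.map (X : Ω → EuclideanSpace ℝ (Fin d)) volume) (X ω),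
            Y ω⟫ ∂volume) :
    Differentiable ℝ (fun x : Fin N → EuclideanSpace ℝ (Fin d) => u (empMeas x)) ∧
    ∀ (x : Fin N → EuclideanSpace ℝ (Fin d)) (j : Fin N) (v : EuclideanSpace ℝ (Fin d)),
      fderiv ℝ (fun x : Fin N → EuclideanSpace ℝ (Fin d) => u (empMeas x)) x
          (Pi.single j v) = ⟪(1 / N : ℝ) • Du (empMeas x) (x j), v⟫ := by
  suffices hgrad : ∀ x, HasFDerivAt (fun x : Fin N → EuclideanSpace ℝ (Fin d) => u (empMeas x))
      (piInnerSL fun j => (1 / N : ℝ) • Du (empMeas x) (x j)) x from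
    ⟨fun x => (hgrad x).differentiableAt, fun x j v => by rw [(hgrad x).fderiv, piInnerSL_single]⟩
  intro x
  rcases Nat.eq_zero_or_pos N with rfl | hN
  · exact (hasFDerivAt_of_subsingleton _ x).congr_fderiv (Subsingleton.elim _ _)
  rcases subsingleton_or_nontrivial (EuclideanSpace ℝ (Fin d)) with _ | _
  · exact (hasFDerivAt_of_subsingleton _ x).congr_fderiv (Subsingleton.elim _ _)
  have : NeZero N := .of_pos hN
  have := Module.Free.infinite ℝ (EuclideanSpace ℝ (Fin d))
  let p : Fin N ↪ EuclideanSpace ℝ (Fin d) :=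
    Fin.valEmbedding.trans (Infinite.natEmbedding (EuclideanSpace ℝ (Fin d)))
  obtain ⟨Z, hZ⟩ := hrich (empMeas p) (isProbabilityMeasure_empMeas p)
    (lintegral_nnnorm_sq_empMeas_lt_top p)
  obtain ⟨ι, hι, hιlaw⟩ := exists_measurable_map_eq_smul_sum_dirac
    (Lp.stronglyMeasurable Z).measurable p.injective hZ
  let T := precompLp (E := EuclideanSpace ℝ (Fin d)) volume 2 hι
  have hlaw (y) : volume.map (T y) = empMeas y := by
    rw [map_precompLp, hιlaw, empMeas_eq_map]
  obtain ⟨D', hD', hD'eq⟩ := hL (T x)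
  have hF : (fun y => u (empMeas y)) =
      (fun Y : Lp (EuclideanSpace ℝ (Fin d)) 2 (volume : Measure Ω) => u (volume.map Y)) ∘ T := by
    funext y
    rw [Function.comp_apply, hlaw]
  rw [hF]
  refine (hD'.comp x T.hasFDerivAt).congr_fderiv (ContinuousLinearMap.ext fun y => ?_)
  rw [ContinuousLinearMap.comp_apply, hD'eq, hlaw, integral_inner_precompLp hι hιlaw]
  simp [one_div, ENNReal.toReal_inv]

/-- if `u : P₂(ℝ^d) → ℝ` is L-differentiable, i.e. its lift
`X ↦ u(Law(X))` to `L²(Ω;ℝ^d)` is Fréchet differentiable with derivative represented by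
`∂_μ u(Law(X), X(·))`, then for `N > 1` the empirical projection
`u^N(x¹,…,x^N) = u((1/N)∑ δ_{x^l})` is differentiable and
`∂_{x^j} u^N(x) = (1/N) ∂_μ u(μ̄^N(x), x^j)`. -/
theorem empirical_projection_lions_derivative {d N : ℕ} (hN : 1 < N)
    (Ω : Type) [MeasureSpace Ω] [IsProbabilityMeasure (volume : Measure Ω)]
    (u : Measure (EuclideanSpace ℝ (Fin d)) → ℝ)
    (Du : Measure (EuclideanSpace ℝ (Fin d)) → EuclideanSpace ℝ (Fin d) →
      EuclideanSpace ℝ (Fin d))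
    (hDucont : ∀ μ, Continuous (Du μ))
    -- the underlying probability space is rich enough: any law with finite second
    -- moment is realized by some square-integrable random variable
    (hrich : ∀ μ : Measure (EuclideanSpace ℝ (Fin d)), IsProbabilityMeasure μ →
      (∫⁻ x, ‖x‖₊ ^ 2 ∂μ) < ⊤ →
        ∃ X : Lp (EuclideanSpace ℝ (Fin d)) 2 (volume : Measure Ω),
          Measure.map (X : Ω → EuclideanSpace ℝ (Fin d)) volume = μ)
    -- L-differentiability: the lift is Fréchet differentiable at every `X`, with
    -- derivative represented by `∂_μ u (Law X, X ·) = Du (Law X) (X ·)`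
    (hL : ∀ X : Lp (EuclideanSpace ℝ (Fin d)) 2 (volume : Measure Ω),
      ∃ D' : Lp (EuclideanSpace ℝ (Fin d)) 2 (volume : Measure Ω) →L[ℝ] ℝ,
        HasFDerivAt
          (fun Y : Lp (EuclideanSpace ℝ (Fin d)) 2 (volume : Measure Ω) =>
            u (Measure.map (Y : Ω → EuclideanSpace ℝ (Fin d)) volume)) D' X ∧
        ∀ Y : Lp (EuclideanSpace ℝ (Fin d)) 2 (volume : Measure Ω),
          D' Y = ∫ ω, ⟪Du (Measure.map (X : Ω → EuclideanSpace ℝ (Fin d)) volume) (X ω),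
            Y ω⟫ ∂volume) :
    Differentiable ℝ (fun x : Fin N → EuclideanSpace ℝ (Fin d) => u (empMeas x)) ∧
    ∀ (x : Fin N → EuclideanSpace ℝ (Fin d)) (j : Fin N) (v : EuclideanSpace ℝ (Fin d)),
      fderiv ℝ (fun x : Fin N → EuclideanSpace ℝ (Fin d) => u (empMeas x)) x
          (Pi.single j v) = ⟪(1 / N : ℝ) • Du (empMeas x) (x j), v⟫ :=
  empirical_projection_lions_derivative_general Ω u Du hrich hL
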